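/- arXiv:2007.08015 — 2 statements merged into one kernel-verified Lean document; each statement's English description precedes it below -/
import Mathlib

section
/- Let Ω ⊆ ℝ² be a nonempty open convex set and let w = (w₁, w₂) : ℝ² → ℝ² be continuously differentiable on Ω. Then the deviatoric symmetric gradient of w vanishes identically on Ω (i.e. ∂_i w_j(x) + ∂_j w_i(x) − (2/3)(∂₁w₁(x) + ∂₂w₂(x))·δ_ij = 0 for all x ∈ Ω and all i, j ∈ {1,2}) if and only if there exist constants k₁, k₂, k₃ ∈ ℝ such that w(x₁, x₂) = (k₁·x₂ + k₂, −k₁·x₁ + k₃) for all (x₁, x₂) ∈ Ω. -/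
/-!
In two dimensions the deviatoric condition at a point says exactly that `Dw(x)` is skew,
`Dw(x) = [[0, k(x)], [-k(x), 0]]`: the two diagonal equations force `∂₁w₁ = ∂₂w₂ = 0`.
On the convex set `Ω` this makes `w₁` independent of `x₁` and `w₂` independent of `x₂`, hence
`k = ∂₂w₁` is independent of `x₁` while `-k = ∂₁w₂` is independent of `x₂`. A function on a
connected open subset of the plane that is independent of each coordinate separately is locally
constant (move inside a small box), hence constant; so `Dw` is a constant skew map and `w` is
that map plus a constant.
-/

open Filter Topology Set

theorem IsPreconnected.exists_forall_eq_of_eventually_eq {X Y : Type*} [TopologicalSpace X]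
    [Nonempty Y] {s : Set X} (hs : IsPreconnected s) {f : X → Y}
    (hf : ∀ x ∈ s, ∀ᶠ y in 𝓝[s] x, f y = f x) : ∃ c, ∀ x ∈ s, f x = c := by
  rcases s.eq_empty_or_nonempty with rfl | ⟨p, hp⟩
  · exact ⟨Classical.arbitrary Y, by simp⟩
  have := isPreconnected_iff_preconnectedSpace.1 hs
  have hloc : IsLocallyConstant (s.domRestrict f) := by
    refine (IsLocallyConstant.iff_eventually_eq _).2 fun x => ?_
    have := hf x x.2
    rwa [← map_nhds_subtype_val, eventually_map] at this
  exact ⟨f p, fun x hx => hloc.apply_eq_of_preconnectedSpace ⟨x, hx⟩ ⟨p, hp⟩⟩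

def IndependentOfCoordOn {ι α : Type*} (i : ι) (f : (ι → ℝ) → α) (s : Set (ι → ℝ)) : Prop :=
  ∀ y ∈ s, ∀ z ∈ s, (∀ j ≠ i, y j = z j) → f y = f z

section

variable {E F : Type*} [NormedAddCommGroup E] [NormedSpace ℝ E] [NormedAddCommGroup F]
  [NormedSpace ℝ F]

theorem Convex.apply_add_smul_eq_of_fderiv_apply_eq_zero {s : Set E} (hs : Convex ℝ s)
    {f : E → F} {v : E} (hf : ∀ x ∈ s, DifferentiableAt ℝ f x)
    (hfv : ∀ x ∈ s, fderiv ℝ f x v = 0) {y : E} {t : ℝ} (hy : y ∈ s) (hyt : y + t • v ∈ s) :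
    f (y + t • v) = f y := by
  have hseg : ∀ τ ∈ Icc (0 : ℝ) 1, y + τ • (t • v) ∈ s := fun τ hτ => by
    simpa using hs.add_smul_sub_mem hy hyt hτ
  have hderiv :
      ∀ τ ∈ Icc (0 : ℝ) 1, HasDerivAt (fun τ : ℝ => f (y + τ • (t • v))) 0 τ := by
    intro τ hτ
    have hline : HasDerivAt (fun τ : ℝ => y + τ • (t • v)) (t • v) τ := by
      simpa using ((hasDerivAt_id τ).smul_const (t • v)).const_add y
    have h := (hf _ (hseg τ hτ)).hasFDerivAt.comp_hasDerivAt τ hline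
    rwa [map_smul, hfv _ (hseg τ hτ), smul_zero] at h
  have := constant_of_has_deriv_right_zero
    (fun τ hτ => (hderiv τ hτ).continuousAt.continuousWithinAt)
    (fun τ hτ => (hderiv τ (Ico_subset_Icc_self hτ)).hasDerivWithinAt)
    1 ⟨zero_le_one, le_rfl⟩
  simpa using this

variable {ι : Type*} [Fintype ι]

theorem Convex.independentOfCoordOn_of_fderiv_single_eq_zero [DecidableEq ι] {s : Set (ι → ℝ)}
    (hs : Convex ℝ s) {f : (ι → ℝ) → F} {i : ι} (hf : ∀ x ∈ s, DifferentiableAt ℝ f x)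
    (hfi : ∀ x ∈ s, fderiv ℝ f x (Pi.single i 1) = 0) : IndependentOfCoordOn i f s := by
  intro y hy z hz hyz
  have hzy : z = y + (z i - y i) • Pi.single i 1 := by
    ext j
    rcases eq_or_ne j i with rfl | hj
    · simp
    · simp [Pi.single_eq_of_ne hj, hyz j hj]
  rw [hzy] at hz ⊢
  exact (hs.apply_add_smul_eq_of_fderiv_apply_eq_zero hf hfi hy hz).symm

theorem IsOpen.independentOfCoordOn_fderiv {s : Set (ι → ℝ)} (hs : IsOpen s)
    {f : (ι → ℝ) → F} {i : ι} (hf : IndependentOfCoordOn i f s) :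
    IndependentOfCoordOn i (fderiv ℝ f) s := by
  intro y hy z hz hyz
  have hshift : f =ᶠ[𝓝 y] fun x => f (x + (z - y)) := by
    have hz' : ∀ᶠ x in 𝓝 y, x + (z - y) ∈ s :=
      ((continuous_add_const (z - y)).tendsto' y z (by abel)).eventually (hs.mem_nhds hz)
    filter_upwards [hs.mem_nhds hy, hz'] with x hx hxz
    refine hf x hx _ hxz fun j hj => ?_
    simp [hyz j hj]
  rw [hshift.fderiv_eq, fderiv_comp_add_right, add_sub_cancel]

end

theorem exists_forall_eq_of_independentOfCoordOn_zero_one {α : Type*} [Nonempty α]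
    {s : Set (Fin 2 → ℝ)} (hs : IsOpen s) (hs' : IsPreconnected s) {g : (Fin 2 → ℝ) → α}
    (h0 : IndependentOfCoordOn 0 g s) (h1 : IndependentOfCoordOn 1 g s) :
    ∃ c, ∀ x ∈ s, g x = c := by
  refine hs'.exists_forall_eq_of_eventually_eq fun p hp => ?_
  obtain ⟨ε, hε, hball⟩ := Metric.isOpen_iff.1 hs p hp
  refine eventually_nhdsWithin_of_eventually_nhds ?_
  filter_upwards [Metric.ball_mem_nhds p hε] with x hx
  -- Sup-norm balls are boxes, so the corner `q` joins `x` to `p` by two coordinate moves.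
  set q := Function.update x 0 (p 0)
  have hq : q ∈ Metric.ball p ε := by
    rw [Metric.mem_ball, dist_pi_lt_iff hε]
    intro j
    fin_cases j
    · simpa [q] using hε
    · simpa [q] using dist_le_pi_dist x p 1 |>.trans_lt hx
  calc g x = g q := h0 x (hball hx) q (hball hq) fun j hj => by simp [q, hj]
    _ = g p := h1 q (hball hq) p hp fun j hj => by
      fin_cases j
      · simp [q]
      · exact absurd rfl hj

noncomputable def skewMap (k : ℝ) : (Fin 2 → ℝ) →L[ℝ] (Fin 2 → ℝ) :=
  k • ContinuousLinearMap.pi ![ContinuousLinearMap.proj 1, -ContinuousLinearMap.proj 0]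

theorem skewMap_apply (k : ℝ) (v : Fin 2 → ℝ) : skewMap k v = ![k * v 1, -k * v 0] := by
  ext j
  fin_cases j <;> simp [skewMap]

theorem deviatoric_eq_zero_iff_eq_skewMap (L : (Fin 2 → ℝ) →L[ℝ] (Fin 2 → ℝ)) :
    (∀ i j : Fin 2, L (Pi.single i 1) j + L (Pi.single j 1) i
        - (2 / 3) * (L (Pi.single 0 1) 0 + L (Pi.single 1 1) 1) * (if i = j then (1 : ℝ) else 0)
          = 0) ↔ ∃ k, L = skewMap k := by
  constructor
  · intro h
    have h00 := h 0 0
    have h01 := h 0 1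
    have h11 := h 1 1
    norm_num at h00 h01 h11
    refine ⟨L (Pi.single 1 1) 0,
      ContinuousLinearMap.coe_injective ((Pi.basisFun ℝ (Fin 2)).ext fun i => ?_)⟩
    ext j
    fin_cases i <;> fin_cases j <;> simp [skewMap_apply] <;> linarith
  · rintro ⟨k, rfl⟩ i j
    fin_cases i <;> fin_cases j <;> simp [skewMap_apply]

theorem exists_forall_eq_of_fderiv_eq_skewMap {s : Set (Fin 2 → ℝ)} (hs : IsOpen s)
    (hs' : Convex ℝ s) {w : (Fin 2 → ℝ) → (Fin 2 → ℝ)}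
    (hw : ∀ x ∈ s, DifferentiableAt ℝ w x)
    {k : (Fin 2 → ℝ) → ℝ} (hk : ∀ x ∈ s, fderiv ℝ w x = skewMap (k x)) :
    ∃ c, ∀ x ∈ s, k x = c := by
  have hwi (i : Fin 2) (x : Fin 2 → ℝ) (hx : x ∈ s) (v : Fin 2 → ℝ) :
      fderiv ℝ (fun y => w y i) x v = skewMap (k x) v i := by
    rw [fderiv_apply (hw x hx), hk x hx]
    rfl
  have hw0 : IndependentOfCoordOn 0 (fun y => w y 0) s :=
    hs'.independentOfCoordOn_of_fderiv_single_eq_zero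
      (fun x hx => differentiableAt_pi.1 (hw x hx) 0)
      fun x hx => by simp [hwi 0 x hx, skewMap_apply]
  have hw1 : IndependentOfCoordOn 1 (fun y => w y 1) s :=
    hs'.independentOfCoordOn_of_fderiv_single_eq_zero
      (fun x hx => differentiableAt_pi.1 (hw x hx) 1)
      fun x hx => by simp [hwi 1 x hx, skewMap_apply]
  refine exists_forall_eq_of_independentOfCoordOn_zero_one hs hs'.isPreconnected
    (fun y hy z hz hyz => ?_) (fun y hy z hz hyz => ?_)
  · have := congr($(hs.independentOfCoordOn_fderiv hw0 y hy z hz hyz) (Pi.single 1 1))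
    simpa [hwi 0 _ hy, hwi 0 _ hz, skewMap_apply] using this
  · have := congr($(hs.independentOfCoordOn_fderiv hw1 y hy z hz hyz) (Pi.single 0 1))
    simpa [hwi 1 _ hy, hwi 1 _ hz, skewMap_apply] using this

theorem deviatoric_sym_grad_eq_zero_iff_2d_general
    (Ω : Set (Fin 2 → ℝ)) (hopen : IsOpen Ω) (hconv : Convex ℝ Ω)
    (w : (Fin 2 → ℝ) → (Fin 2 → ℝ)) (hw : ContDiffOn ℝ 1 w Ω) :
    (∀ x ∈ Ω, ∀ i j : Fin 2,
        fderiv ℝ w x (Pi.single i 1) j + fderiv ℝ w x (Pi.single j 1) i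
          - (2 / 3) * (fderiv ℝ w x (Pi.single 0 1) 0 + fderiv ℝ w x (Pi.single 1 1) 1)
            * (if i = j then (1 : ℝ) else 0) = 0)
    ↔ ∃ k₁ k₂ k₃ : ℝ, ∀ x ∈ Ω,
        w x = ![k₁ * x 1 + k₂, -k₁ * x 0 + k₃] := by
  have hdiff : DifferentiableOn ℝ w Ω := hw.differentiableOn one_ne_zero
  simp_rw [deviatoric_eq_zero_iff_eq_skewMap]
  constructor
  · intro h
    choose! k hk using h
    obtain ⟨k₁, hk₁⟩ := exists_forall_eq_of_fderiv_eq_skewMap hopen hconv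
      (fun x hx => hdiff.differentiableAt (hopen.mem_nhds hx)) hk
    obtain ⟨c, hc⟩ := hopen.exists_eq_add_of_fderiv_eq hconv.isPreconnected hdiff
      (skewMap k₁).differentiableOn fun x hx => by
        rw [hk x hx, hk₁ x hx, ContinuousLinearMap.fderiv]
    refine ⟨k₁, c 0, c 1, fun x hx => ?_⟩
    rw [hc hx]
    ext j
    fin_cases j <;> simp [skewMap_apply]
  · rintro ⟨k₁, k₂, k₃, hk⟩ x hx
    have hw_eq : w =ᶠ[𝓝 x] fun y => skewMap k₁ y + ![k₂, k₃] := by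
      filter_upwards [hopen.mem_nhds hx] with y hy
      rw [hk y hy, skewMap_apply]
      ext j
      fin_cases j <;> simp
    exact ⟨k₁, by rw [hw_eq.fderiv_eq, fderiv_add_const, ContinuousLinearMap.fderiv]⟩

/-- In 2D, the deviatoric symmetric gradient of a `C¹` vector field `w`
vanishes on a nonempty open convex set `Ω` iff `w` has the form
`(x₁, x₂) ↦ (k₁ x₂ + k₂, −k₁ x₁ + k₃)` on `Ω`. -/
theorem deviatoric_sym_grad_eq_zero_iff_2d
    (Ω : Set (Fin 2 → ℝ)) (hne : Ω.Nonempty) (hopen : IsOpen Ω) (hconv : Convex ℝ Ω)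
    (w : (Fin 2 → ℝ) → (Fin 2 → ℝ)) (hw : ContDiffOn ℝ 1 w Ω) :
    (∀ x ∈ Ω, ∀ i j : Fin 2,
        fderiv ℝ w x (Pi.single i 1) j + fderiv ℝ w x (Pi.single j 1) i
          - (2 / 3) * (fderiv ℝ w x (Pi.single 0 1) 0 + fderiv ℝ w x (Pi.single 1 1) 1)
            * (if i = j then (1 : ℝ) else 0) = 0)
    ↔ ∃ k₁ k₂ k₃ : ℝ, ∀ x ∈ Ω,
        w x = ![k₁ * x 1 + k₂, -k₁ * x 0 + k₃] :=
  deviatoric_sym_grad_eq_zero_iff_2d_general Ω hopen hconv w hw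
end

section
/- Let k₁, k₂, ..., k₁₀ ∈ ℝ and define w = (w₁, w₂, w₃) : ℝ³ → ℝ³ by w₁(x) = k₁x₂ + k₂x₃ + k₄ − (x₁² + x₂² + x₃²)·k₈ + (2(k₈x₁ + k₉x₂ + k₁₀x₃) + k₇)·x₁, w₂(x) = −k₁x₁ + k₃x₃ + k₅ − (x₁² + x₂² + x₃²)·k₉ + (2(k₈x₁ + k₉x₂ + k₁₀x₃) + k₇)·x₂, and w₃(x) = −k₂x₁ − k₃x₂ + k₆ − (x₁² + x₂² + x₃²)·k₁₀ + (2(k₈x₁ + k₉x₂ + k₁₀x₃) + k₇)·x₃. Suppose there exist b, c, d ∈ ℝ such that w(b·x₂ + c·x₃ + d, x₂, x₃) = 0 for all x₂, x₃ ∈ ℝ (i.e., w vanishes on the plane x₁ = b x₂ + c x₃ + d). Then k₁ = k₂ = ⋯ = k₁₀ = 0, and consequently w vanishes identically on ℝ³. -/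
/-- If a member of the ten-parameter kernel family of polynomial vector
fields on ℝ³ vanishes on a plane `x₁ = b x₂ + c x₃ + d`, then all ten parameters are
zero and the field vanishes identically. -/
theorem kernel_field_vanishing_on_plane_3d
    (k₁ k₂ k₃ k₄ k₅ k₆ k₇ k₈ k₉ k₁₀ : ℝ)
    (w : (Fin 3 → ℝ) → (Fin 3 → ℝ))
    (hw : ∀ x : Fin 3 → ℝ, w x =
      ![k₁ * x 1 + k₂ * x 2 + k₄ - (x 0 ^ 2 + x 1 ^ 2 + x 2 ^ 2) * k₈
          + (2 * (k₈ * x 0 + k₉ * x 1 + k₁₀ * x 2) + k₇) * x 0,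
        -k₁ * x 0 + k₃ * x 2 + k₅ - (x 0 ^ 2 + x 1 ^ 2 + x 2 ^ 2) * k₉
          + (2 * (k₈ * x 0 + k₉ * x 1 + k₁₀ * x 2) + k₇) * x 1,
        -k₂ * x 0 - k₃ * x 1 + k₆ - (x 0 ^ 2 + x 1 ^ 2 + x 2 ^ 2) * k₁₀
          + (2 * (k₈ * x 0 + k₉ * x 1 + k₁₀ * x 2) + k₇) * x 2])
    (b c d : ℝ)
    (hplane : ∀ x₂ x₃ : ℝ, w ![b * x₂ + c * x₃ + d, x₂, x₃] = 0) :
    k₁ = 0 ∧ k₂ = 0 ∧ k₃ = 0 ∧ k₄ = 0 ∧ k₅ = 0 ∧ k₆ = 0 ∧ k₇ = 0 ∧ k₈ = 0 ∧ k₉ = 0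
      ∧ k₁₀ = 0 ∧ ∀ x : Fin 3 → ℝ, w x = 0 := by
  have key : ∀ y z : ℝ,
      (k₁ * y + k₂ * z + k₄ - ((b*y+c*z+d) ^ 2 + y ^ 2 + z ^ 2) * k₈
          + (2 * (k₈ * (b*y+c*z+d) + k₉ * y + k₁₀ * z) + k₇) * (b*y+c*z+d) = 0)
    ∧ (-k₁ * (b*y+c*z+d) + k₃ * z + k₅ - ((b*y+c*z+d) ^ 2 + y ^ 2 + z ^ 2) * k₉
          + (2 * (k₈ * (b*y+c*z+d) + k₉ * y + k₁₀ * z) + k₇) * y = 0)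
    ∧ (-k₂ * (b*y+c*z+d) - k₃ * y + k₆ - ((b*y+c*z+d) ^ 2 + y ^ 2 + z ^ 2) * k₁₀
          + (2 * (k₈ * (b*y+c*z+d) + k₉ * y + k₁₀ * z) + k₇) * z = 0) := by
    intro y z
    have h := hplane y z
    rw [hw] at h
    refine ⟨?_, ?_, ?_⟩
    · have := congrFun h 0; simpa using this
    · have := congrFun h 1; simpa using this
    · have := congrFun h 2; simpa using this
  obtain ⟨h001, h002, h003⟩ := key 0 0
  obtain ⟨h101, h102, h103⟩ := key 1 0
  obtain ⟨hm01, hm02, hm03⟩ := key (-1) 0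
  obtain ⟨h011, h012, h013⟩ := key 0 1
  obtain ⟨h0m1, h0m2, h0m3⟩ := key 0 (-1)
  have hc : (1:ℝ) + c ^ 2 ≠ 0 := by positivity
  have hb : (1:ℝ) + b ^ 2 ≠ 0 := by positivity
  have hk9 : k₉ = 0 := by
    have h : k₉ * (1 + c ^ 2) = 0 := by
      linear_combination (-(1:ℝ)/2) * h012 + (-(1:ℝ)/2) * h0m2 + h002
    exact (mul_eq_zero.mp h).resolve_right hc
  have hk10 : k₁₀ = 0 := by
    have h : k₁₀ * (1 + b ^ 2) = 0 := by
      linear_combination (-(1:ℝ)/2) * h103 + (-(1:ℝ)/2) * hm03 + h003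
    exact (mul_eq_zero.mp h).resolve_right hb
  have hk8 : k₈ = 0 := by
    linear_combination (b/4) * h102 + (b/4) * hm02 - (b/2) * h002
      - (1/2 : ℝ) * h101 - (1/2 : ℝ) * hm01 + h001 + (b^3/2 + 3*b/2) * hk9
  have hk7 : k₇ = 0 := by
    have h : k₇ * (1 + b ^ 2) = 0 := by
      linear_combination (1/2 : ℝ) * h102 - (1/2 : ℝ) * hm02 + (b/2) * h101
        - (b/2) * hm01 - (2*d*(1+b^2)) * hk8
    exact (mul_eq_zero.mp h).resolve_right hb
  have hk1 : k₁ = 0 := by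
    linear_combination (1/2 : ℝ) * h101 - (1/2 : ℝ) * hm01
      - (2*b*d) * hk8 - (2*d) * hk9 - b * hk7
  have hk2 : k₂ = 0 := by
    linear_combination (1/2 : ℝ) * h011 - (1/2 : ℝ) * h0m1
      - (2*c*d) * hk8 - (2*d) * hk10 - c * hk7
  have hk3 : k₃ = 0 := by
    linear_combination (1/2 : ℝ) * h012 - (1/2 : ℝ) * h0m2 + c * hk1 + (2*c*d) * hk9
  have hk4 : k₄ = 0 := by
    linear_combination h001 - d^2 * hk8 - d * hk7
  have hk5 : k₅ = 0 := by
    linear_combination h002 + d * hk1 + d^2 * hk9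
  have hk6 : k₆ = 0 := by
    linear_combination h003 + d * hk2 + d^2 * hk10
  refine ⟨hk1, hk2, hk3, hk4, hk5, hk6, hk7, hk8, hk9, hk10, ?_⟩
  intro x
  rw [hw]
  funext i
  fin_cases i <;>
    simp [hk1, hk2, hk3, hk4, hk5, hk6, hk7, hk8, hk9, hk10]
end
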